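/- Let n, m ≥ 2 be coprime integers. Then c_poly(nm) ≥ c_poly(n) · c_poly(m). -/

import Mathlib

/-- `cyc σ` is the number of cycles in the cycle decomposition of the permutation `σ`,
counting fixed points as cycles; i.e., the number of orbits of `σ`. -/
noncomputable def cyc {α : Type*} (σ : Equiv.Perm α) : ℕ :=
  Nat.card (Quotient (Setoid.mk σ.SameCycle
    ⟨fun x => Equiv.Perm.SameCycle.refl σ x, fun h => h.symm, fun h h' => h.trans h'⟩))

/-- `c_poly(n)`: the minimum, over all permutations `π` of `ℤ_n` that are induced by a
polynomial with coefficients in `ℤ_n`, of the maximum over `k ∈ ℤ_n` of the number of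
cycles of the cyclic shift `x ↦ π (x + k)`. -/
noncomputable def cPoly (n : ℕ) : ℕ :=
  sInf { m : ℕ | ∃ π : Equiv.Perm (ZMod n),
    (∃ f : Polynomial (ZMod n), ∀ a : ZMod n, π a = f.eval a) ∧
    m = sSup { m' : ℕ | ∃ k : ZMod n, m' = cyc (π * Equiv.addRight k) } }

/-! By the Chinese remainder theorem `ZMod (n * m) ≃+* ZMod n × ZMod m`, and reducing the
polynomial of a permutation `π` of `ZMod (n * m)` modulo `n` and `m` exhibits `π` as conjugate
to a product `σ × τ` of polynomial permutations; the shift by `k` becomes the product of the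
shifts by the components of `k`. Orbits of a product permutation map onto pairs of orbits, so
`cyc (σ' × τ') ≥ cyc σ' * cyc τ'`. Choosing `π` optimal and the two component shifts maximal
for `σ` and `τ` gives the bound. -/

open Equiv Equiv.Perm Polynomial

def Equiv.Perm.prodCongrHom (α β : Type*) : Perm α × Perm β →* Perm (α × β) where
  toFun p := p.1.prodCongr p.2
  map_one' := rfl
  map_mul' _ _ := rfl

section Cycles

variable {α β : Type*}

theorem Equiv.permCongr_zpow (e : α ≃ β) (σ : Perm α) (i : ℤ) :
    e.permCongr σ ^ i = e.permCongr (σ ^ i) :=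
  (map_zpow e.permCongrHom σ i).symm

theorem Equiv.Perm.prodCongr_zpow (σ : Perm α) (τ : Perm β) (i : ℤ) :
    σ.prodCongr τ ^ i = (σ ^ i).prodCongr (τ ^ i) :=
  (map_zpow (prodCongrHom α β) (σ, τ) i).symm

theorem Equiv.Perm.sameCycle_permCongr (e : α ≃ β) (σ : Perm α) {x y : α} :
    (e.permCongr σ).SameCycle (e x) (e y) ↔ σ.SameCycle x y :=
  exists_congr fun i => by simp [permCongr_zpow]

theorem Equiv.Perm.SameCycle.of_prodCongr {σ : Perm α} {τ : Perm β} {a b : α × β}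
    (h : SameCycle (σ.prodCongr τ) a b) : σ.SameCycle a.1 b.1 ∧ τ.SameCycle a.2 b.2 := by
  obtain ⟨i, hi⟩ := h
  rw [prodCongr_zpow] at hi
  exact ⟨⟨i, congrArg Prod.fst hi⟩, ⟨i, congrArg Prod.snd hi⟩⟩

theorem cyc_eq_card_quotient (σ : Perm α) :
    cyc σ = Nat.card (Quotient (SameCycle.setoid σ)) :=
  rfl

theorem cyc_permCongr (e : α ≃ β) (σ : Perm α) : cyc (e.permCongr σ) = cyc σ :=
  (Nat.card_congr (Quotient.congr e fun _ _ => (sameCycle_permCongr e σ).symm)).symm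

theorem cyc_mul_cyc_le_cyc_prodCongr [Finite α] [Finite β] (σ : Perm α) (τ : Perm β) :
    cyc σ * cyc τ ≤ cyc (σ.prodCongr τ) := by
  rw [cyc_eq_card_quotient, cyc_eq_card_quotient, cyc_eq_card_quotient, ← Nat.card_prod]
  refine Nat.card_le_card_of_surjective
    (Quotient.lift (fun p => (Quotient.mk _ p.1, Quotient.mk _ p.2)) fun a b h =>
      Prod.ext (Quotient.sound h.of_prodCongr.1) (Quotient.sound h.of_prodCongr.2)) ?_
  rintro ⟨x, y⟩
  induction x using Quotient.inductionOn
  induction y using Quotient.inductionOn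
  exact ⟨Quotient.mk _ (_, _), rfl⟩

end Cycles

section Shifts

variable {G H K : Type*} [AddGroup G] [AddGroup H] [AddGroup K]

/-- `cPoly n` is by definition the infimum of `maxShiftCyc π` over polynomial permutations `π`
of `ZMod n`. -/
noncomputable def maxShiftCyc (π : Perm G) : ℕ :=
  sSup {m' : ℕ | ∃ k : G, m' = cyc (π * Equiv.addRight k)}

theorem maxShiftCyc_eq_iSup (π : Perm G) :
    maxShiftCyc π = ⨆ k : G, cyc (π * Equiv.addRight k) := by
  simp only [maxShiftCyc, iSup, Set.range, eq_comm]

theorem cyc_le_maxShiftCyc [Finite G] (π : Perm G) (k : G) :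
    cyc (π * Equiv.addRight k) ≤ maxShiftCyc π :=
  maxShiftCyc_eq_iSup π ▸
    le_ciSup (Set.finite_range fun k ↦ cyc (π * Equiv.addRight k)).bddAbove k

theorem exists_cyc_eq_maxShiftCyc [Finite G] (π : Perm G) :
    ∃ k : G, cyc (π * Equiv.addRight k) = maxShiftCyc π :=
  maxShiftCyc_eq_iSup π ▸ exists_eq_ciSup_of_finite

theorem AddEquiv.permCongr_addRight (e : G ≃+ H) (k : G) :
    e.toEquiv.permCongr (Equiv.addRight k) = Equiv.addRight (e k) := by
  ext x
  simp

theorem maxShiftCyc_mul_le_of_permCongr_eq [Finite H] [Finite K] (e : G ≃+ H × K)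
    {π : Perm G} {σ : Perm H} {τ : Perm K} (hπ : e.toEquiv.permCongr π = σ.prodCongr τ) :
    maxShiftCyc σ * maxShiftCyc τ ≤ maxShiftCyc π := by
  have : Finite G := .of_equiv _ e.toEquiv.symm
  obtain ⟨k₁, hk₁⟩ := exists_cyc_eq_maxShiftCyc σ
  obtain ⟨k₂, hk₂⟩ := exists_cyc_eq_maxShiftCyc τ
  have hconj : e.toEquiv.permCongr (π * Equiv.addRight (e.symm (k₁, k₂))) =
      (σ * Equiv.addRight k₁).prodCongr (τ * Equiv.addRight k₂) := by
    rw [permCongr_mul, hπ, e.permCongr_addRight, e.apply_symm_apply]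
    rfl
  calc maxShiftCyc σ * maxShiftCyc τ
      = cyc (σ * Equiv.addRight k₁) * cyc (τ * Equiv.addRight k₂) := by rw [hk₁, hk₂]
    _ ≤ cyc ((σ * Equiv.addRight k₁).prodCongr (τ * Equiv.addRight k₂)) :=
      cyc_mul_cyc_le_cyc_prodCongr _ _
    _ = cyc (π * Equiv.addRight (e.symm (k₁, k₂))) := by rw [← hconj, cyc_permCongr]
    _ ≤ maxShiftCyc π := cyc_le_maxShiftCyc _ _

end Shifts

section PolyPerm

variable {R S : Type*} [CommSemiring R] [CommSemiring S]

def IsPolyPerm (π : Perm R) : Prop :=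
  ∃ f : R[X], ∀ a : R, π a = f.eval a

theorem IsPolyPerm.exists_map [Finite S] {φ : R →+* S} (hφ : Function.Surjective φ)
    {π : Perm R} (hπ : IsPolyPerm π) :
    ∃ σ : Perm S, IsPolyPerm σ ∧ ∀ x, σ (φ x) = φ (π x) := by
  obtain ⟨f, hf⟩ := hπ
  have hcomm : ∀ x, (f.map φ).eval (φ x) = φ (π x) := fun x => by rw [eval_map_apply, hf]
  have hsurj : Function.Surjective fun y => (f.map φ).eval y := by
    intro y
    obtain ⟨x, rfl⟩ := hφ y
    obtain ⟨w, rfl⟩ := π.surjective x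
    exact ⟨φ w, hcomm w⟩
  exact ⟨.ofBijective _ (Finite.surjective_iff_bijective.mp hsurj), ⟨f.map φ, fun _ => rfl⟩,
    hcomm⟩

end PolyPerm

theorem cPoly_le_maxShiftCyc {n : ℕ} {π : Perm (ZMod n)} (hπ : IsPolyPerm π) :
    cPoly n ≤ maxShiftCyc π :=
  Nat.sInf_le ⟨π, hπ, rfl⟩

theorem exists_isPolyPerm_maxShiftCyc_eq_cPoly (n : ℕ) :
    ∃ π : Perm (ZMod n), IsPolyPerm π ∧ maxShiftCyc π = cPoly n := by
  obtain ⟨π, hπ, h⟩ := Nat.sInf_mem (s := {m : ℕ | ∃ π : Perm (ZMod n), IsPolyPerm π ∧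
    m = maxShiftCyc π}) ⟨_, 1, ⟨X, fun _ => eval_X.symm⟩, rfl⟩
  exact ⟨π, hπ, h.symm⟩

theorem cPoly_mul_ge_of_coprime (n m : ℕ) (hn : 2 ≤ n) (hm : 2 ≤ m)
    (hco : Nat.Coprime n m) :
    cPoly n * cPoly m ≤ cPoly (n * m) := by
  have : NeZero n := ⟨by omega⟩
  have : NeZero m := ⟨by omega⟩
  let e := ZMod.chineseRemainder hco
  obtain ⟨π, hπ, hπc⟩ := exists_isPolyPerm_maxShiftCyc_eq_cPoly (n * m)
  obtain ⟨σ, hσ, hσπ⟩ := hπ.exists_map (φ := (RingHom.fst _ _).comp e.toRingHom)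
    (Prod.fst_surjective.comp e.surjective)
  obtain ⟨τ, hτ, hτπ⟩ := hπ.exists_map (φ := (RingHom.snd _ _).comp e.toRingHom)
    (Prod.snd_surjective.comp e.surjective)
  have hconj : e.toAddEquiv.toEquiv.permCongr π = σ.prodCongr τ := by
    ext x
    · simpa using (hσπ (e.symm x)).symm
    · simpa using (hτπ (e.symm x)).symm
  calc cPoly n * cPoly m ≤ maxShiftCyc σ * maxShiftCyc τ :=
        Nat.mul_le_mul (cPoly_le_maxShiftCyc hσ) (cPoly_le_maxShiftCyc hτ)
    _ ≤ maxShiftCyc π := maxShiftCyc_mul_le_of_permCongr_eq e.toAddEquiv hconj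
    _ = cPoly (n * m) := hπc
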